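/- arXiv:1702.06058 — 2 statements merged into one kernel-verified Lean document; each statement's English description precedes it below -/
import Mathlib

section
/- Let H be a complex Hilbert space and let a : H × H → ℂ be a bounded sesquilinear form. Suppose T : H → H is a continuous linear isomorphism with T ∘ T = id, and there exists α > 0 such that |a(u, T u)| ≥ α‖u‖² for all u ∈ H. Then the bounded linear operator A : H → H defined by ⟨A u, v⟩ = a(u, v) for all u, v ∈ H is bijective, and its inverse is bounded with ‖A⁻¹‖ ≤ ‖T‖/α. -/
open scoped ComplexConjugate

/-- Abstract T-coercivity: if a bounded sesquilinear form `a` on a complex Hilbert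
space satisfies `|a(u, T u)| ≥ α ‖u‖²` for an involutive continuous linear
isomorphism `T`, then the operator `A` representing `a` via the inner product is
bijective with bounded inverse, `‖A⁻¹‖ ≤ ‖T‖ / α`. -/
theorem tcoercivity_bijective_boundedInverse
    {H : Type*} [NormedAddCommGroup H] [InnerProductSpace ℂ H] [CompleteSpace H]
    (a : H → H → ℂ)
    (ha_add_left : ∀ u u' v : H, a (u + u') v = a u v + a u' v)
    (ha_smul_left : ∀ (c : ℂ) (u v : H), a (c • u) v = conj c * a u v)
    (ha_add_right : ∀ u v v' : H, a u (v + v') = a u v + a u v')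
    (ha_smul_right : ∀ (c : ℂ) (u v : H), a u (c • v) = c * a u v)
    (Ca : ℝ) (ha_bdd : ∀ u v : H, ‖a u v‖ ≤ Ca * ‖u‖ * ‖v‖)
    (T : H ≃L[ℂ] H) (hT : ∀ u : H, T (T u) = u)
    (α : ℝ) (hα : 0 < α)
    (hcoer : ∀ u : H, α * ‖u‖ ^ 2 ≤ ‖a u (T u)‖)
    (A : H →L[ℂ] H) (hA : ∀ u v : H, (inner ℂ (A u) v : ℂ) = a u v) :
    Function.Bijective A ∧
      ∀ u : H, ‖u‖ ≤ (‖(T : H →L[ℂ] H)‖ / α) * ‖A u‖ := by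
  set Tc : H →L[ℂ] H := (T : H →L[ℂ] H) with hTc
  -- key lower bound: α ‖u‖ ≤ ‖Tc‖ * ‖A u‖
  have key : ∀ u : H, α * ‖u‖ ≤ ‖Tc‖ * ‖A u‖ := by
    intro u
    rcases eq_or_ne u 0 with rfl | hu
    · simp [mul_nonneg (norm_nonneg Tc) (norm_nonneg (A 0))]
    · have h1 : α * ‖u‖ ^ 2 ≤ ‖A u‖ * (‖Tc‖ * ‖u‖) := by
        calc α * ‖u‖ ^ 2 ≤ ‖a u (T u)‖ := hcoer u
          _ = ‖(inner ℂ (A u) (T u) : ℂ)‖ := by rw [hA]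
          _ ≤ ‖A u‖ * ‖T u‖ := norm_inner_le_norm _ _
          _ ≤ ‖A u‖ * (‖Tc‖ * ‖u‖) := by
              exact mul_le_mul_of_nonneg_left (Tc.le_opNorm u) (norm_nonneg _)
      have hun : (0:ℝ) < ‖u‖ := norm_pos_iff.mpr hu
      have := (mul_le_mul_iff_left₀ hun).mpr (le_refl (1:ℝ))
      nlinarith [norm_nonneg (A u), norm_nonneg Tc]
  have bound : ∀ u : H, ‖u‖ ≤ (‖Tc‖ / α) * ‖A u‖ := by
    intro u
    rw [div_mul_eq_mul_div, le_div_iff₀ hα]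
    linarith [key u]
  -- injectivity
  have hinj : Function.Injective A := by
    intro u v huv
    have h := key (u - v)
    rw [map_sub, huv, sub_self, norm_zero, mul_zero] at h
    have : ‖u - v‖ ≤ 0 := by nlinarith
    have : u - v = 0 := norm_le_zero_iff.mp this
    exact sub_eq_zero.mp this
  -- closed range via antilipschitz
  have hanti : AntilipschitzWith (‖Tc‖ / α).toNNReal A := by
    apply ContinuousLinearMap.antilipschitz_of_bound
    intro x
    rw [Real.coe_toNNReal _ (div_nonneg (norm_nonneg _) hα.le)]
    exact bound x
  have hclosed : IsClosed ((LinearMap.range (A : H →ₗ[ℂ] H) : Submodule ℂ H) : Set H) := by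
    rw [LinearMap.coe_range]
    exact hanti.isClosed_range A.uniformContinuous
  have : CompleteSpace (LinearMap.range (A : H →ₗ[ℂ] H)) := hclosed.completeSpace_coe
  -- dense range: orthogonal complement trivial
  have horth : (LinearMap.range (A : H →ₗ[ℂ] H))ᗮ = ⊥ := by
    rw [Submodule.eq_bot_iff]
    intro v hv
    have hz : a (T v) v = 0 := by
      rw [← hA]
      exact hv (A (T v)) ⟨T v, rfl⟩
    have h := hcoer (T v)
    rw [hT, hz, norm_zero] at h
    have hTv : T v = 0 := by
      have : ‖T v‖ ^ 2 ≤ 0 := by nlinarith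
      have : ‖T v‖ = 0 := by nlinarith [norm_nonneg (T v), sq_nonneg (‖T v‖)]
      exact norm_eq_zero.mp this
    have := hT v
    rw [hTv, map_zero] at this
    exact this.symm
  have hsurj : Function.Surjective A := by
    have : LinearMap.range (A : H →ₗ[ℂ] H) = ⊤ := Submodule.orthogonal_eq_bot_iff.mp horth
    exact LinearMap.range_eq_top.mp this
  exact ⟨⟨hinj, hsurj⟩, bound⟩
end

section
/- Let H be a Hilbert space and let T_ε(τ), T_0(τ) be families of compact operators on H, analytic in τ on a domain U ⊂ ℂ \ {0}, with ‖T_ε(τ) − T_0(τ)‖ → 0 uniformly on compact subsets of U as ε → 0. Suppose τ_ε ∈ U are nonlinear eigenvalues of T_ε (i.e. there exist unit vectors x_ε with τ_ε T_ε(τ_ε) x_ε = x_ε) and τ_ε → τ ∈ U. Then τ is a nonlinear eigenvalue of T_0, i.e. 1/τ is an eigenvalue of the operator pencil: there is a nonzero x with τ T_0(τ) x = x. -/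
open Filter Topology

/-- Converse spectral convergence: limits of nonlinear eigenvalues of a
norm-convergent family of analytic compact operator functions are nonlinear
eigenvalues of the limit family. -/
theorem nonlinear_eigenvalue_limit
    {H : Type*} [NormedAddCommGroup H] [InnerProductSpace ℂ H] [CompleteSpace H]
    (Tε : ℝ → ℂ → (H →L[ℂ] H)) (T0 : ℂ → (H →L[ℂ] H))
    (U : Set ℂ) (hUopen : IsOpen U) (hU0 : (0 : ℂ) ∉ U)
    (hanalytic0 : AnalyticOn ℂ T0 U)
    (hanalyticε : ∀ e : ℝ, 0 < e → AnalyticOn ℂ (Tε e) U)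
    (hcompact0 : ∀ τ ∈ U, IsCompactOperator (T0 τ))
    (hcompactε : ∀ e : ℝ, 0 < e → ∀ τ ∈ U, IsCompactOperator (Tε e τ))
    (hconv : ∀ K : Set ℂ, K ⊆ U → IsCompact K →
      TendstoUniformlyOn (fun e : ℝ => fun τ => Tε e τ) T0 (𝓝[>] 0) K)
    (εs : ℕ → ℝ) (hεs : ∀ n, 0 < εs n) (hεs0 : Tendsto εs atTop (𝓝 0))
    (τs : ℕ → ℂ) (hτsU : ∀ n, τs n ∈ U)
    (xs : ℕ → H) (hxs : ∀ n, ‖xs n‖ = 1)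
    (heig : ∀ n, τs n • (Tε (εs n) (τs n)) (xs n) = xs n)
    (τ : ℂ) (hτU : τ ∈ U) (hτs : Tendsto τs atTop (𝓝 τ)) :
    ∃ x : H, x ≠ 0 ∧ τ • (T0 τ) x = x := by
  -- a compact neighborhood of τ inside U
  obtain ⟨δ, hδpos, hδU⟩ : ∃ δ > 0, Metric.closedBall τ δ ⊆ U := by
    rcases Metric.isOpen_iff.1 hUopen τ hτU with ⟨r, hr, hrU⟩
    exact ⟨r / 2, by linarith, (Metric.closedBall_subset_ball (by linarith)).trans hrU⟩
  -- εs tends to 0 within (0, ∞)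
  have hεs0' : Tendsto εs atTop (𝓝[>] (0 : ℝ)) :=
    tendsto_nhdsWithin_of_tendsto_nhds_of_eventually_within _ hεs0
      (Eventually.of_forall fun n => hεs n)
  have hτsK : ∀ᶠ n in atTop, τs n ∈ Metric.closedBall τ δ :=
    hτs (Metric.closedBall_mem_nhds τ hδpos)
  -- operator norm difference at τs n tends to 0
  have hD : Tendsto (fun n => ‖Tε (εs n) (τs n) - T0 (τs n)‖) atTop (𝓝 0) := by
    have huc := hconv (Metric.closedBall τ δ) hδU (isCompact_closedBall τ δ)
    rw [Metric.tendstoUniformlyOn_iff] at huc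
    rw [Metric.tendsto_nhds]
    intro η hη
    have h1 : ∀ᶠ n in atTop, ∀ z ∈ Metric.closedBall τ δ,
        dist (T0 z) (Tε (εs n) z) < η := hεs0' (huc η hη)
    filter_upwards [h1, hτsK] with n h1n h2n
    have := h1n (τs n) h2n
    rw [dist_eq_norm, norm_sub_rev] at this
    simpa [Real.dist_eq, abs_of_nonneg (norm_nonneg _)] using this
  -- continuity of z ↦ z • T0 z at τ
  have hcont : Tendsto (fun n => τs n • T0 (τs n)) atTop (𝓝 (τ • T0 τ)) := by
    have hc : ContinuousOn (fun z : ℂ => z • T0 z) U :=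
      continuousOn_id.smul hanalytic0.continuousOn
    exact ((hc.continuousAt (hUopen.mem_nhds hτU)).tendsto).comp hτs
  have hcont' : Tendsto (fun n => ‖τs n • T0 (τs n) - τ • T0 τ‖) atTop (𝓝 0) := by
    rw [← tendsto_iff_norm_sub_tendsto_zero] ; exact hcont
  -- the error term g n := xs n - τ • T0 τ (xs n) tends to 0
  set g : ℕ → H := fun n => xs n - τ • (T0 τ) (xs n) with hgdef
  have hgbound : ∀ n, ‖g n‖ ≤ ‖τs n‖ * ‖Tε (εs n) (τs n) - T0 (τs n)‖
      + ‖τs n • T0 (τs n) - τ • T0 τ‖ := by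
    intro n
    have hrw : g n = τs n • ((Tε (εs n) (τs n) - T0 (τs n)) (xs n))
        + ((τs n • T0 (τs n) - τ • T0 τ) (xs n)) := by
      have h := heig n
      simp only [hgdef, ContinuousLinearMap.sub_apply, ContinuousLinearMap.smul_apply, smul_sub]
      rw [h]
      abel
    calc ‖g n‖ ≤ ‖τs n • ((Tε (εs n) (τs n) - T0 (τs n)) (xs n))‖
          + ‖(τs n • T0 (τs n) - τ • T0 τ) (xs n)‖ := by rw [hrw]; exact norm_add_le _ _
      _ ≤ ‖τs n‖ * ‖Tε (εs n) (τs n) - T0 (τs n)‖ + ‖τs n • T0 (τs n) - τ • T0 τ‖ := by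
          gcongr
          · rw [norm_smul]
            gcongr
            calc ‖(Tε (εs n) (τs n) - T0 (τs n)) (xs n)‖
                ≤ ‖Tε (εs n) (τs n) - T0 (τs n)‖ * ‖xs n‖ :=
                  ContinuousLinearMap.le_opNorm _ _
              _ = ‖Tε (εs n) (τs n) - T0 (τs n)‖ := by rw [hxs n, mul_one]
          · calc ‖(τs n • T0 (τs n) - τ • T0 τ) (xs n)‖
                ≤ ‖τs n • T0 (τs n) - τ • T0 τ‖ * ‖xs n‖ := ContinuousLinearMap.le_opNorm _ _
              _ = ‖τs n • T0 (τs n) - τ • T0 τ‖ := by rw [hxs n, mul_one]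
  have hg0 : Tendsto g atTop (𝓝 0) := by
    rw [tendsto_zero_iff_norm_tendsto_zero]
    apply squeeze_zero (fun n => norm_nonneg _) hgbound
    have : Tendsto (fun n => ‖τs n‖) atTop (𝓝 ‖τ‖) := hτs.norm
    simpa using (this.mul hD).add hcont'
  -- compactness: extract a convergent subsequence of T0 τ (xs n)
  obtain ⟨K, hK, hKsub⟩ :=
    (hcompact0 τ hτU).image_closedBall_subset_compact (𝕜₁ := ℂ)
      (f := (T0 τ : H →ₗ[ℂ] H)) 1
  have hmem : ∀ n, (T0 τ) (xs n) ∈ K := fun n =>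
    hKsub ⟨xs n, by simp [Metric.mem_closedBall, hxs n], rfl⟩
  obtain ⟨y, hyK, φ, hφ, hty⟩ := hK.tendsto_subseq hmem
  -- the limit x := τ • y
  refine ⟨τ • y, ?_, ?_⟩
  · -- xs (φ n) → τ • y and each has norm 1
    have hx : Tendsto (fun n => xs (φ n)) atTop (𝓝 (τ • y)) := by
      have : (fun n => xs (φ n)) = fun n => g (φ n) + τ • (T0 τ) (xs (φ n)) := by
        funext n; simp [hgdef]
      rw [this]
      simpa using (hg0.comp hφ.tendsto_atTop).add (hty.const_smul τ)
    have hn1 : ‖τ • y‖ = 1 := by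
      have h1 : Tendsto (fun n => ‖xs (φ n)‖) atTop (𝓝 ‖τ • y‖) := hx.norm
      simp only [hxs] at h1
      exact tendsto_nhds_unique h1 tendsto_const_nhds
    intro h
    rw [h, norm_zero] at hn1
    exact one_ne_zero hn1.symm
  · -- τ • T0 τ (τ • y) = τ • y
    have hx : Tendsto (fun n => xs (φ n)) atTop (𝓝 (τ • y)) := by
      have : (fun n => xs (φ n)) = fun n => g (φ n) + τ • (T0 τ) (xs (φ n)) := by
        funext n; simp [hgdef]
      rw [this]
      simpa using (hg0.comp hφ.tendsto_atTop).add (hty.const_smul τ)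
    have h1 : Tendsto (fun n => (T0 τ) (xs (φ n))) atTop (𝓝 ((T0 τ) (τ • y))) :=
      ((T0 τ).continuous.tendsto _).comp hx
    have h2 : (T0 τ) (τ • y) = y := tendsto_nhds_unique h1 hty
    rw [h2]
end
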